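/- arXiv:0802.0852 — 2 statements merged into one kernel-verified Lean document; each statement's English description precedes it below -/
import Mathlib

section
/- Every quaternion q admits a polar representation with a complex 'modulus' and complex argument: there exist real numbers a, b, c, d such that q = (a + b·i) · exp((c + d·i)·j), where the product and exponential are taken in the quaternion algebra. -/
/-!
Write `q = z₁ + z₂ j` with `z₁ = w + x i`, `z₂ = y + z i`. For `β = ρ e^{iφ}` the quaternion
`β j` squares to `-ρ²`, so `exp (β j) = cos ρ + sin ρ · e^{iφ} j`, and
`(a + b i) exp (β j) = α cos ρ + α sin ρ e^{iφ} j` with `α = a + b i`. It therefore suffices to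
take `|z₁| = R cos ρ`, `|z₂| = R sin ρ` (polar coordinates of the point `(|z₁|, |z₂|)`),
`α = R e^{iθ₁}` and `φ = θ₂ - θ₁`, where `θ₁, θ₂` are the arguments of `z₁, z₂`.
-/

open scoped Quaternion

/-- The quaternion `w + x·i + y·j + z·k`. -/
def Qmk (w x y z : ℝ) : ℍ[ℝ] := ⟨w, x, y, z⟩

open Real

@[simp] lemma Qmk_re (w x y z : ℝ) : (Qmk w x y z).re = w := rfl
@[simp] lemma Qmk_imI (w x y z : ℝ) : (Qmk w x y z).imI = x := rfl
@[simp] lemma Qmk_imJ (w x y z : ℝ) : (Qmk w x y z).imJ = y := rfl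
@[simp] lemma Qmk_imK (w x y z : ℝ) : (Qmk w x y z).imK = z := rfl

lemma Qmk_mul_Qmk (a b c d e f g h : ℝ) :
    Qmk a b c d * Qmk e f g h =
      Qmk (a * e - b * f - c * g - d * h) (a * f + b * e + c * h - d * g)
        (a * g - b * h + c * e + d * f) (a * h + b * g - c * f + d * e) := by
  ext <;> simp [Quaternion.re_mul, Quaternion.imI_mul, Quaternion.imJ_mul, Quaternion.imK_mul]

lemma Qmk_mul_j (c d : ℝ) : Qmk c d 0 0 * Qmk 0 0 1 0 = Qmk 0 0 c d := by
  rw [Qmk_mul_Qmk]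
  congr 1 <;> ring

lemma norm_Qmk (w x y z : ℝ) : ‖Qmk w x y z‖ = √(w ^ 2 + x ^ 2 + y ^ 2 + z ^ 2) := by
  rw [norm_eq_sqrt_real_inner, Quaternion.inner_self, Quaternion.normSq_def']
  rfl

lemma sin_abs_div_abs_mul_self (x : ℝ) : sin |x| / |x| * x = sin x := by
  rcases eq_or_ne x 0 with rfl | hx
  · simp
  rcases abs_cases x with ⟨h, -⟩ | ⟨h, -⟩ <;> rw [h] <;> field_simp [hx]
  simp [sin_neg]

lemma exp_Qmk_polar (ρ φ : ℝ) :
    NormedSpace.exp (Qmk 0 0 (ρ * cos φ) (ρ * sin φ)) =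
      Qmk (cos ρ) 0 (sin ρ * cos φ) (sin ρ * sin φ) := by
  have hnorm : ‖Qmk 0 0 (ρ * cos φ) (ρ * sin φ)‖ = |ρ| := by
    rw [norm_Qmk, ← sqrt_sq_eq_abs]
    congr 1
    linear_combination ρ ^ 2 * sin_sq_add_cos_sq φ
  rw [Quaternion.exp_of_re_eq_zero _ rfl, hnorm, cos_abs, ← sin_abs_div_abs_mul_self ρ]
  ext <;> simp <;> ring

lemma Qmk_polar_mul_exp_Qmk_polar (R θ ρ φ : ℝ) :
    Qmk (R * cos θ) (R * sin θ) 0 0 * NormedSpace.exp (Qmk 0 0 (ρ * cos φ) (ρ * sin φ)) =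
      Qmk (R * cos ρ * cos θ) (R * cos ρ * sin θ)
        (R * sin ρ * cos (θ + φ)) (R * sin ρ * sin (θ + φ)) := by
  rw [exp_Qmk_polar, Qmk_mul_Qmk, cos_add, sin_add]
  congr 1 <;> ring

lemma exists_polar (x y : ℝ) : ∃ r θ : ℝ, r * cos θ = x ∧ r * sin θ = y :=
  ⟨‖(⟨x, y⟩ : ℂ)‖, Complex.arg ⟨x, y⟩, Complex.norm_mul_cos_arg _, Complex.norm_mul_sin_arg _⟩

/-- Every quaternion `q` admits a polar representation `q = (a + b·i) · exp((c + d·i)·j)`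
with `a, b, c, d` real, where `(c + d·i)·j` is the quaternion product (equal to `c·j + d·k`). -/
theorem quaternion_polar_form (q : ℍ[ℝ]) :
    ∃ a b c d : ℝ,
      q = Qmk a b 0 0 * NormedSpace.exp (Qmk c d 0 0 * Qmk 0 0 1 0) := by
  obtain ⟨w, x, y, z⟩ := q
  obtain ⟨r₁, θ₁, rfl, rfl⟩ := exists_polar w x
  obtain ⟨r₂, θ₂, rfl, rfl⟩ := exists_polar y z
  obtain ⟨R, ρ, rfl, rfl⟩ := exists_polar r₁ r₂
  refine ⟨R * cos θ₁, R * sin θ₁, ρ * cos (θ₂ - θ₁), ρ * sin (θ₂ - θ₁), ?_⟩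
  rw [Qmk_mul_j, Qmk_polar_mul_exp_Qmk_polar, add_sub_cancel]
  rfl
end

section
/- Every unit quaternion with zero i-component lies in the image of the exponential restricted to the (j,k)-plane together with sign: for every quaternion u = α + γ·j + δ·k with α² + γ² + δ² = 1, there exist real numbers c and d such that u = exp(c·j + d·k). -/
open scoped Quaternion

/-! A unit quaternion `u` is `cos θ + sin θ · w` with `θ = arccos (re u)` and `w` a unit pure
quaternion along `im u`, and Euler's formula `exp (θ • w) = cos θ + sin θ • w` holds for every
unit pure quaternion `w`. When `u` has no `i`-component, `w` can be taken in the `(j,k)`-plane: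
`w = cos φ · j + sin φ · k` with `φ` the argument of `γ + δ·i ∈ ℂ` (any `φ` works when
`γ = δ = 0`, which covers `u = -1 = exp (π · j)`). -/

namespace Quaternion

lemma sq_re_add_sq_norm_im (q : ℍ[ℝ]) : q.re ^ 2 + ‖q.im‖ ^ 2 = ‖q‖ ^ 2 := by
  simp only [sq, ← normSq_eq_norm_mul_self, normSq_def', re_im, imI_im, imJ_im, imK_im]
  ring

lemma exp_smul_of_re_eq_zero_of_norm_eq_one {w : ℍ[ℝ]} (hw : w.re = 0) (hw₁ : ‖w‖ = 1)
    (t : ℝ) : NormedSpace.exp (t • w) = ↑(Real.cos t) + Real.sin t • w := by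
  have hnorm : ‖t • w‖ = |t| := by rw [norm_smul, hw₁, mul_one, Real.norm_eq_abs]
  have hsin : Real.sin |t| / |t| * t = Real.sin t := by
    rcases le_total 0 t with ht | ht
    · rw [abs_of_nonneg ht]
      exact div_mul_cancel_of_imp fun h ↦ by simp [h]
    · rw [abs_of_nonpos ht, Real.sin_neg, neg_div_neg_eq]
      exact div_mul_cancel_of_imp fun h ↦ by simp [h]
  rw [exp_of_re_eq_zero _ (by simp [hw]), hnorm, Real.cos_abs, smul_smul, hsin]

lemma exp_arccos_re_smul_eq_self {u w : ℍ[ℝ]} (hu : ‖u‖ = 1) (hw : w.re = 0) (hw₁ : ‖w‖ = 1)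
    {r : ℝ} (hr : 0 ≤ r) (him : u.im = r • w) :
    NormedSpace.exp (Real.arccos u.re • w) = u := by
  have hpyth := sq_re_add_sq_norm_im u
  rw [hu, him, norm_smul, hw₁, mul_one, Real.norm_eq_abs, abs_of_nonneg hr] at hpyth
  have hre₁ : -1 ≤ u.re := by nlinarith
  have hre₂ : u.re ≤ 1 := by nlinarith
  have hsin : Real.sin (Real.arccos u.re) = r := by
    rw [Real.sin_arccos, ← Real.sqrt_sq hr]
    congr 1
    linarith
  rw [exp_smul_of_re_eq_zero_of_norm_eq_one hw hw₁, Real.cos_arccos hre₁ hre₂, hsin, ← him,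
    re_add_im]

end Quaternion

/-- `c·j + d·k`, named because `simp` lemmas about `ℍ[ℝ]` do not fire on a bare structure
literal, whose type is `QuaternionAlgebra ℝ (-1) 0 (-1)`. -/
def jkQuaternion (c d : ℝ) : ℍ[ℝ] := ⟨0, 0, c, d⟩

@[simp] lemma jkQuaternion_re (c d : ℝ) : (jkQuaternion c d).re = 0 := rfl
@[simp] lemma jkQuaternion_imI (c d : ℝ) : (jkQuaternion c d).imI = 0 := rfl
@[simp] lemma jkQuaternion_imJ (c d : ℝ) : (jkQuaternion c d).imJ = c := rfl
@[simp] lemma jkQuaternion_imK (c d : ℝ) : (jkQuaternion c d).imK = d := rfl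

lemma smul_jkQuaternion (t c d : ℝ) : t • jkQuaternion c d = jkQuaternion (t * c) (t * d) := by
  ext <;> simp

lemma norm_jkQuaternion (c d : ℝ) : ‖jkQuaternion c d‖ = √(c ^ 2 + d ^ 2) := by
  rw [← Real.sqrt_sq (norm_nonneg _), sq, ← Quaternion.normSq_eq_norm_mul_self,
    Quaternion.normSq_def']
  simp

lemma exists_exp_jkQuaternion_eq {u : ℍ[ℝ]} (hu : ‖u‖ = 1) (hi : u.imI = 0) :
    ∃ c d : ℝ, NormedSpace.exp (jkQuaternion c d) = u := by
  set φ := Complex.arg ⟨u.imJ, u.imK⟩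
  have hw : ‖jkQuaternion (Real.cos φ) (Real.sin φ)‖ = 1 := by
    simp [norm_jkQuaternion]
  have him : u.im = ‖(⟨u.imJ, u.imK⟩ : ℂ)‖ • jkQuaternion (Real.cos φ) (Real.sin φ) := by
    ext <;> simp [hi, φ, Complex.norm_mul_cos_arg, Complex.norm_mul_sin_arg]
  refine ⟨Real.arccos u.re * Real.cos φ, Real.arccos u.re * Real.sin φ, ?_⟩
  rw [← smul_jkQuaternion]
  exact Quaternion.exp_arccos_re_smul_eq_self hu (jkQuaternion_re _ _) hw (norm_nonneg _) him

/-- Every unit quaternion with zero i-component is the exponential of a quaternion in the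
(j,k)-plane: if `u = α + γ·j + δ·k` with `α² + γ² + δ² = 1`, then there exist real `c`, `d`
with `u = exp (c·j + d·k)`. -/
theorem unit_jk_quaternion_mem_exp_image (α γ δ : ℝ)
    (h : α ^ 2 + γ ^ 2 + δ ^ 2 = 1) :
    ∃ c d : ℝ, (⟨α, 0, γ, δ⟩ : ℍ[ℝ]) = (NormedSpace.exp (⟨0, 0, c, d⟩ : ℍ[ℝ]) : ℍ[ℝ]) := by
  set u : ℍ[ℝ] := ⟨α, 0, γ, δ⟩
  have hu : ‖u‖ = 1 := by
    have hsq : ‖u‖ ^ 2 = 1 := by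
      rw [sq, ← Quaternion.normSq_eq_norm_mul_self, Quaternion.normSq_def']
      change α ^ 2 + 0 ^ 2 + γ ^ 2 + δ ^ 2 = 1
      simpa using h
    exact (pow_eq_one_iff_of_nonneg (norm_nonneg _) two_ne_zero).mp hsq
  obtain ⟨c, d, hcd⟩ := exists_exp_jkQuaternion_eq hu rfl
  exact ⟨c, d, hcd.symm⟩
end
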